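/- arXiv:1608.01570 — 5 statements merged into one kernel-verified Lean document; each statement's English description precedes it below -/
import Mathlib

section
/- Let F be a free group with basis S and x ∈ S. If g ∈ F satisfies g x^z g⁻¹ ∈ ⟨x⟩ for some nonzero integer z, then g ∈ ⟨x⟩. In particular, the maximal cyclic subgroup ⟨x⟩ generated by a basis element is self-normalizing in F. -/
/-!
Both the hypothesis and the conclusion are unchanged when `g` is replaced by `a * g * b` with
`a, b ∈ ⟨x⟩`, so we may strip letters `x^±1` from both ends of the reduced word of `g`, which
shortens it. Once neither end of the reduced word `w` of `g ≠ 1` is a letter `x^±1`, the word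
`w · x^z · w⁻¹` admits no cancellation, so `g x^z g⁻¹` has a reduced word beginning with a letter
other than `x^±1` and cannot lie in `⟨x⟩`.
-/

open List Subgroup

section Conjugation

variable {G : Type*} [Group G] {y a g b : G}

theorem conj_zpow_mem_zpowers_iff_of_mem_zpowers (ha : a ∈ zpowers y) (hb : b ∈ zpowers y)
    (z : ℤ) :
    a * g * b * y ^ z * (a * g * b)⁻¹ ∈ zpowers y ↔ g * y ^ z * g⁻¹ ∈ zpowers y := by
  obtain ⟨i, rfl⟩ := ha
  obtain ⟨j, rfl⟩ := hb
  have hconj : y ^ i * g * y ^ j * y ^ z * (y ^ i * g * y ^ j)⁻¹ =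
      y ^ i * (g * y ^ z * g⁻¹) * (y ^ i)⁻¹ := by group
  rw [hconj, mul_mem_cancel_right (inv_mem (zpow_mem_zpowers y i)),
    mul_mem_cancel_left (zpow_mem_zpowers y i)]

end Conjugation

namespace FreeGroup

variable {α : Type*} {x : α}

theorem mk_singleton_mem_zpowers_of (x : α) (b : Bool) : mk [(x, b)] ∈ zpowers (of x) := by
  cases b
  · exact inv_mem (mem_zpowers (of x))
  · exact mem_zpowers (of x)

variable [DecidableEq α]

theorem fst_eq_of_mem_toWord_of_mem_zpowers {w : FreeGroup α} (hw : w ∈ zpowers (of x)) :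
    ∀ p ∈ w.toWord, p.1 = x := by
  rw [zpowers_eq_closure] at hw
  induction hw using closure_induction with
  | mem _ h => simp_all [toWord_of]
  | one => simp
  | mul u v _ _ hu hv =>
    intro p hp
    rcases mem_append.mp ((toWord_mul_sublist u v).subset hp) with hp | hp
    exacts [hu p hp, hv p hp]
  | inv u _ hu =>
    intro p hp
    rw [toWord_inv, invRev, mem_reverse, mem_map] at hp
    obtain ⟨q, hq, rfl⟩ := hp
    exact hu q hq

theorem IsReduced.invRev {L : List (α × Bool)} (h : IsReduced L) : IsReduced (invRev L) :=
  isReduced_iff_reduce_eq.mpr (by rw [reduce_invRev, h.reduce_eq])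

theorem toWord_mul_of_isReduced {u v : FreeGroup α} (h : IsReduced (u.toWord ++ v.toWord)) :
    (u * v).toWord = u.toWord ++ v.toWord := by
  rw [toWord_mul, h.reduce_eq]

theorem isReduced_toWord_append_of_mem_zpowers {u v : FreeGroup α}
    (hu : ∀ p ∈ u.toWord.getLast?, p.1 ≠ x) (hv : v ∈ zpowers (of x)) :
    IsReduced (u.toWord ++ v.toWord) :=
  isChain_append.mpr ⟨isReduced_toWord, isReduced_toWord, fun p hp q hq hpq =>
    absurd (hpq.trans (fst_eq_of_mem_toWord_of_mem_zpowers hv q (mem_of_mem_head? hq)))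
      (hu p hp)⟩

theorem toWord_conj_of_mem_zpowers {g y : FreeGroup α}
    (hg : ∀ p ∈ g.toWord.getLast?, p.1 ≠ x) (hy : y ∈ zpowers (of x)) (hy₁ : y ≠ 1) :
    (g * y * g⁻¹).toWord = g.toWord ++ y.toWord ++ g⁻¹.toWord := by
  have hleft := isReduced_toWord_append_of_mem_zpowers hg hy
  have hright : IsReduced (y.toWord ++ g⁻¹.toWord) := by
    simpa [toWord_inv, invRev_append, invRev_invRev] using
      (isReduced_toWord_append_of_mem_zpowers hg (inv_mem hy)).invRev
  have hgy : (g * y).toWord = g.toWord ++ y.toWord := toWord_mul_of_isReduced hleft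
  have hgyg : IsReduced ((g * y).toWord ++ g⁻¹.toWord) := by
    rw [hgy]
    exact hleft.append_overlap hright (toWord_eq_nil_iff.not.mpr hy₁)
  rw [toWord_mul_of_isReduced hgyg, hgy]

theorem conj_notMem_zpowers_of_toWord {g y : FreeGroup α}
    (hhead : ∀ p ∈ g.toWord.head?, p.1 ≠ x) (hlast : ∀ p ∈ g.toWord.getLast?, p.1 ≠ x)
    (hg : g ≠ 1) (hy : y ∈ zpowers (of x)) (hy₁ : y ≠ 1) :
    g * y * g⁻¹ ∉ zpowers (of x) := by
  intro hconj
  obtain ⟨a, L, hW⟩ := exists_cons_of_ne_nil (toWord_eq_nil_iff.not.mpr hg)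
  have ha : a ∈ (g * y * g⁻¹).toWord := by
    simp [toWord_conj_of_mem_zpowers hlast hy hy₁, hW]
  exact hhead a (by simp [hW]) (fst_eq_of_mem_toWord_of_mem_zpowers hconj a ha)

theorem mem_zpowers_of_conj_zpow_mem (g : FreeGroup α) {z : ℤ} (hz : z ≠ 0)
    (h : g * of x ^ z * g⁻¹ ∈ zpowers (of x)) : g ∈ zpowers (of x) := by
  induction hn : g.norm using Nat.strong_induction_on generalizing g with
  | _ n ih =>
  have peel : ∀ a g' b, a ∈ zpowers (of x) → b ∈ zpowers (of x) → g = a * g' * b →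
      g'.norm < n → g ∈ zpowers (of x) := by
    rintro a g' b ha hb rfl hlt
    rw [conj_zpow_mem_zpowers_iff_of_mem_zpowers ha hb] at h
    exact mul_mem (mul_mem ha (ih _ hlt g' h rfl)) hb
  by_cases hg : g = 1
  · exact hg ▸ one_mem _
  obtain ⟨a, L, hfirst⟩ := exists_cons_of_ne_nil (toWord_eq_nil_iff.not.mpr hg)
  by_cases ha : a.1 = x
  · refine peel (mk [a]) (mk L) 1 (ha ▸ mk_singleton_mem_zpowers_of a.1 a.2) (one_mem _) ?_ ?_
    · rw [mul_one, mul_mk, singleton_append, ← hfirst, mk_toWord]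
    · calc (mk L).norm ≤ L.length := norm_mk_le
        _ < n := by rw [← hn, norm, hfirst, length_cons]; omega
  obtain ⟨M, b, hlast⟩ := (eq_nil_or_concat' g.toWord).resolve_left (by simp [hfirst])
  by_cases hb : b.1 = x
  · refine peel 1 (mk M) (mk [b]) (one_mem _) (hb ▸ mk_singleton_mem_zpowers_of b.1 b.2) ?_ ?_
    · rw [one_mul, mul_mk, ← hlast, mk_toWord]
    · calc (mk M).norm ≤ M.length := norm_mk_le
        _ < n := by rw [← hn, norm, hlast, length_append]; simp
  exact absurd h <| conj_notMem_zpowers_of_toWord (by simpa [hfirst]) (by simpa [hlast])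
    hg (zpow_mem_zpowers _ z) ((IsMulTorsionFree.zpow_eq_one_iff_right (of_ne_one x)).not.mpr hz)

end FreeGroup

/-- In a free group, if `g x^z g⁻¹ ∈ ⟨x⟩` for a basis element `x` and `z ≠ 0`,
then `g ∈ ⟨x⟩`; in particular `⟨x⟩` is self-normalizing. -/
theorem stmt_2 {S : Type*} (x : S) (g : FreeGroup S) (z : ℤ) (hz : z ≠ 0)
    (h : g * FreeGroup.of x ^ z * g⁻¹ ∈ Subgroup.zpowers (FreeGroup.of x)) :
    g ∈ Subgroup.zpowers (FreeGroup.of x) := by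
  classical
  exact FreeGroup.mem_zpowers_of_conj_zpow_mem g hz h
end

section
/- Let p and q be coprime positive integers and let G = ℤ/p * ℤ/q be the free product. If U ≤ G is a torsion-free subgroup of finite index, then the index [G : U] is divisible by pq; in particular [G : U] ≥ pq. -/
open Monoid
open scoped Monoid.Coprod

/-!
An element of finite order fixing a coset `gU` would give the torsion element `g⁻¹hg` of `U`, so
every finite subgroup of `G` acts freely on `G ⧸ U` and its order divides `[G : U]`. The free
factors `ℤ/p` and `ℤ/q` are such subgroups, and `p`, `q` are coprime.
-/

theorem MulAction.card_dvd_card_of_stabilizer_eq_bot {G X : Type*} [Group G] [MulAction G X]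
    (h : ∀ x : X, stabilizer G x = ⊥) : Nat.card G ∣ Nat.card X := by
  rw [Nat.card_congr (selfEquivOrbitsQuotientProd h), Nat.card_prod]
  exact dvd_mul_left _ _

namespace Subgroup

variable {G : Type*} [Group G] {U : Subgroup G}

theorem eq_one_of_isOfFinOrder_of_smul_eq (hU : ∀ g ∈ U, g ≠ 1 → ¬ IsOfFinOrder g) {h : G}
    (hh : IsOfFinOrder h) {x : G ⧸ U} (hx : h • x = x) : h = 1 := by
  induction x using QuotientGroup.induction_on with | H g => ?_
  have hconj : g⁻¹ * h * g ∈ U := by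
    simpa [mul_assoc] using QuotientGroup.eq.mp hx.symm
  have hfin : IsOfFinOrder (g⁻¹ * h * g) := by
    simpa using (MulAut.conj g⁻¹).toMonoidHom.isOfFinOrder hh
  have : g⁻¹ * h * g = 1 := by_contra fun hne => hU _ hconj hne hfin
  simpa [mul_assoc, inv_mul_eq_one] using this

theorem card_dvd_index_of_forall_isOfFinOrder (hU : ∀ g ∈ U, g ≠ 1 → ¬ IsOfFinOrder g)
    (H : Subgroup G) (hH : ∀ h ∈ H, IsOfFinOrder h) : Nat.card H ∣ U.index :=
  MulAction.card_dvd_card_of_stabilizer_eq_bot fun _ =>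
    (eq_bot_iff_forall _).mpr fun h hx =>
      Subtype.ext (eq_one_of_isOfFinOrder_of_smul_eq hU (hH h h.2) hx)

theorem card_dvd_index_of_injective (hU : ∀ g ∈ U, g ≠ 1 → ¬ IsOfFinOrder g) {M : Type*}
    [Group M] [Finite M] {f : M →* G} (hf : Function.Injective f) : Nat.card M ∣ U.index := by
  rw [Nat.card_congr (MonoidHom.ofInjective hf).toEquiv]
  refine card_dvd_index_of_forall_isOfFinOrder hU f.range ?_
  rintro _ ⟨m, rfl⟩
  exact f.isOfFinOrder (isOfFinOrder_of_finite m)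

end Subgroup

/-- A torsion-free finite-index subgroup of `ℤ/p * ℤ/q` (p, q coprime positive)
has index divisible by `pq`; in particular the index is at least `pq`. -/
theorem stmt_5 (p q : ℕ) (hp : 0 < p) (hq : 0 < q) (hcop : Nat.Coprime p q)
    (U : Subgroup (Multiplicative (ZMod p) ∗ Multiplicative (ZMod q)))
    (hfin : U.FiniteIndex)
    (htf : ∀ g ∈ U, g ≠ 1 → ¬ IsOfFinOrder g) :
    p * q ∣ U.index ∧ p * q ≤ U.index := by
  have : NeZero p := ⟨hp.ne'⟩
  have : NeZero q := ⟨hq.ne'⟩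
  have hp_dvd : p ∣ U.index := by
    simpa [Nat.card_eq_fintype_card] using
      Subgroup.card_dvd_index_of_injective htf (Coprod.inl_injective (N := Multiplicative (ZMod q)))
  have hq_dvd : q ∣ U.index := by
    simpa [Nat.card_eq_fintype_card] using
      Subgroup.card_dvd_index_of_injective htf (Coprod.inr_injective (M := Multiplicative (ZMod p)))
  have hpq_dvd : p * q ∣ U.index := hcop.mul_dvd_of_dvd_of_dvd hp_dvd hq_dvd
  exact ⟨hpq_dvd, Nat.le_of_dvd (Nat.pos_of_ne_zero hfin.index_ne_zero) hpq_dvd⟩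
end

section
/- Let F_n be the free group on basis x₁, …, x_n with n ≥ 2, and let U ≤ F_n be a subgroup of finite index q generated by finitely many elements, each of which is conjugate in F_n to some basis element x_i. Then q = 1, i.e., U = F_n. Equivalently: a proper subgroup of F_n generated by conjugates of the basis elements has infinite index. -/
/-!
Let `F` act on a finite set `X` and lift the action to `X × ℤ` by letting each basis element
raise the level by one along each edge of the Schreier graph that is not a loop. The level
shift is a cocycle, and it vanishes on a conjugate `g xₐ g⁻¹` fixing `x`, because the path it
describes from `x` crosses only the loop at `g⁻¹ x`. So if the stabilizer of `x` is generated by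
such conjugates, the level shift vanishes on it. But if some `xₐ` moved a point `w x`, then `xₐ ^ L`
would fix `w x` for some `L > 0` by finiteness, and `w⁻¹ xₐ ^ L w` would be an element of the
stabilizer with positive level shift. Applied to `X = F ⧸ U`, this forces `U = F`.
-/

namespace FreeGroup

open MulAction

variable {α X : Type*} [MulAction (FreeGroup α) X]

open scoped Classical in
noncomputable def edgeWeight (a : α) (x : X) : ℤ := if of a • x = x then 0 else 1

lemma edgeWeight_nonneg (a : α) (x : X) : 0 ≤ edgeWeight a x := by
  unfold edgeWeight; split <;> norm_num

lemma edgeWeight_of_smul_eq {a : α} {x : X} (h : of a • x = x) : edgeWeight a x = 0 := by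
  simp [edgeWeight, h]

lemma edgeWeight_of_smul_ne {a : α} {x : X} (h : of a • x ≠ x) : edgeWeight a x = 1 := by
  simp [edgeWeight, h]

variable (X) in
/-- The `ℤ`-cover of the Schreier graph of `X` in which non-loop edges go up one level. -/
noncomputable def levelCover : FreeGroup α →* Equiv.Perm (X × ℤ) :=
  FreeGroup.lift fun a =>
    { toFun p := (of a • p.1, p.2 + edgeWeight a p.1)
      invFun p := ((of a)⁻¹ • p.1, p.2 - edgeWeight a ((of a)⁻¹ • p.1))
      left_inv p := by simp
      right_inv p := by simp }

noncomputable def levelShift (w : FreeGroup α) (x : X) : ℤ := (levelCover X w (x, 0)).2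

lemma levelCover_apply (w : FreeGroup α) (x : X) (m : ℤ) :
    levelCover X w (x, m) = (w • x, m + levelShift w x) := by
  induction w generalizing x m with
  | C1 => simp [levelShift]
  | of a => simp [levelCover, levelShift]
  | inv_of a _ => simp [levelCover, levelShift, sub_eq_add_neg]
  | mul u v hu hv =>
    have h (m : ℤ) :
        levelCover X (u * v) (x, m) = (u • v • x, m + levelShift v x + levelShift u (v • x)) := by
      rw [_root_.map_mul, Equiv.Perm.mul_apply, hv, hu]
    have h0 : levelShift (u * v) x = levelShift v x + levelShift u (v • x) := by
      change (levelCover X (u * v) (x, 0)).2 = _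
      rw [h, zero_add]
    rw [h, h0, mul_smul, add_assoc]

lemma levelShift_mul (u v : FreeGroup α) (x : X) :
    levelShift (u * v) x = levelShift u (v • x) + levelShift v x := by
  change (levelCover X (u * v) (x, 0)).2 = _
  rw [_root_.map_mul, Equiv.Perm.mul_apply, levelCover_apply, levelCover_apply]
  ring

@[simp]
lemma levelShift_one (x : X) : levelShift (1 : FreeGroup α) x = 0 := by
  simp [levelShift]

lemma levelShift_of (a : α) (x : X) : levelShift (of a) x = edgeWeight a x := by
  simp [levelShift, levelCover]

lemma levelShift_inv (w : FreeGroup α) (x : X) : levelShift w⁻¹ (w • x) = -levelShift w x := by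
  have h := levelShift_mul w⁻¹ w x
  rw [inv_mul_cancel, levelShift_one] at h
  omega

lemma levelShift_conj {v : FreeGroup α} {x : X} (g : FreeGroup α) (h : v • g • x = g • x) :
    levelShift (g⁻¹ * v * g) x = levelShift v (g • x) := by
  have := levelShift_inv g x
  rw [levelShift_mul, levelShift_mul, h]
  omega

lemma levelShift_of_pow_nonneg (a : α) (L : ℕ) (x : X) : 0 ≤ levelShift (of a ^ L) x := by
  induction L generalizing x with
  | zero => simp
  | succ L ih =>
    rw [pow_succ, levelShift_mul, levelShift_of]
    linarith [ih (of a • x), edgeWeight_nonneg a x]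

lemma levelShift_of_pow_pos {a : α} {x : X} (hx : of a • x ≠ x) {L : ℕ} (hL : 0 < L) :
    0 < levelShift (of a ^ L) x := by
  obtain ⟨K, rfl⟩ := Nat.exists_eq_succ_of_ne_zero hL.ne'
  rw [pow_succ, levelShift_mul, levelShift_of, edgeWeight_of_smul_ne hx]
  linarith [levelShift_of_pow_nonneg a K (of a • x)]

lemma levelShift_conj_of_eq_zero {a : α} {g : FreeGroup α} {x : X}
    (h : (g * of a * g⁻¹) • x = x) : levelShift (g * of a * g⁻¹) x = 0 := by
  have hfix : of a • g⁻¹ • x = g⁻¹ • x := by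
    rw [eq_inv_smul_iff, ← mul_smul, ← mul_smul, h]
  simpa [levelShift_of, edgeWeight_of_smul_eq hfix] using levelShift_conj g⁻¹ hfix

lemma levelShift_eq_zero_of_mem_closure {x : X} {S : Set (FreeGroup α)}
    (hS : ∀ s ∈ S, ∃ a g, s = g * of a * g⁻¹) (hSx : S ⊆ stabilizer (FreeGroup α) x)
    {u : FreeGroup α} (hu : u ∈ Subgroup.closure S) : levelShift u x = 0 := by
  have hfix {v : FreeGroup α} (hv : v ∈ Subgroup.closure S) : v • x = x :=
    Subgroup.closure_le _ |>.mpr hSx hv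
  induction hu using Subgroup.closure_induction with
  | mem s hs =>
    obtain ⟨a, g, rfl⟩ := hS s hs
    exact levelShift_conj_of_eq_zero (hSx hs)
  | one => simp
  | mul v w _ hw hv0 hw0 => rw [levelShift_mul, hfix hw, hv0, hw0, add_zero]
  | inv v hv hv0 =>
    have h := levelShift_inv v x
    rw [hfix hv] at h
    rw [h, hv0, neg_zero]

lemma of_smul_smul_eq_of_stabilizer_eq_closure [Finite X] {x : X} {S : Set (FreeGroup α)}
    (hS : ∀ s ∈ S, ∃ a g, s = g * of a * g⁻¹)
    (hx : stabilizer (FreeGroup α) x = Subgroup.closure S) (a : α) (w : FreeGroup α) :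
    of a • w • x = w • x := by
  by_contra hmoved
  have hSx : S ⊆ stabilizer (FreeGroup α) x := hx ▸ Subgroup.subset_closure
  set L := period (of a) (w • x)
  have hL : 0 < L :=
    Function.minimalPeriod_pos_of_mem_periodicPts ((MulAction.injective (of a)).mem_periodicPts _)
  have hret : of a ^ L • w • x = w • x := pow_period_smul _ _
  have hmem : w⁻¹ * of a ^ L * w ∈ Subgroup.closure S := by
    rw [← hx, mem_stabilizer_iff, mul_smul, mul_smul, hret, inv_smul_smul]
  have hzero := levelShift_eq_zero_of_mem_closure hS hSx hmem
  have hpos := levelShift_of_pow_pos hmoved hL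
  rw [levelShift_conj w hret] at hzero
  omega

theorem stabilizer_eq_top_of_eq_closure_conj [Finite X] {x : X} {S : Set (FreeGroup α)}
    (hS : ∀ s ∈ S, ∃ a g, s = g * of a * g⁻¹)
    (hx : stabilizer (FreeGroup α) x = Subgroup.closure S) :
    stabilizer (FreeGroup α) x = ⊤ := by
  have hgen :
      Subgroup.closure (Set.range of) ≤ ⨅ w : FreeGroup α, stabilizer (FreeGroup α) (w • x) := by
    rw [Subgroup.closure_le]
    rintro _ ⟨a, rfl⟩
    exact Subgroup.mem_iInf.mpr fun w => of_smul_smul_eq_of_stabilizer_eq_closure hS hx a w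
  rw [closure_range_of] at hgen
  refine eq_top_iff.mpr fun g _ => ?_
  simpa using Subgroup.mem_iInf.mp (hgen (Subgroup.mem_top g)) 1

theorem _root_.Subgroup.eq_top_of_eq_closure_conj_of_finiteIndex {U : Subgroup (FreeGroup α)}
    [U.FiniteIndex] {S : Set (FreeGroup α)} (hS : ∀ s ∈ S, ∃ a g, s = g * of a * g⁻¹)
    (hU : U = Subgroup.closure S) : U = ⊤ := by
  have := U.finite_quotient_of_finiteIndex
  rw [← stabilizer_quotient U] at hU ⊢
  exact stabilizer_eq_top_of_eq_closure_conj hS hU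

end FreeGroup

theorem stmt_7_general (n : ℕ) (U : Subgroup (FreeGroup (Fin n)))
    (S : Finset (FreeGroup (Fin n)))
    (hS : ∀ s ∈ S, ∃ (i : Fin n) (g : FreeGroup (Fin n)),
      s = g * FreeGroup.of i * g⁻¹)
    (hU : U = Subgroup.closure (S : Set (FreeGroup (Fin n))))
    (hfin : U.FiniteIndex) :
    U.index = 1 ∧ U = ⊤ := by
  have htop := U.eq_top_of_eq_closure_conj_of_finiteIndex hS hU
  exact ⟨htop ▸ Subgroup.index_top, htop⟩

/-- A finite-index subgroup of `F_n` (n ≥ 2) generated by finitely many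
conjugates of basis elements is the whole group, i.e. has index 1. -/
theorem stmt_7 (n : ℕ) (hn : 2 ≤ n) (U : Subgroup (FreeGroup (Fin n)))
    (S : Finset (FreeGroup (Fin n)))
    (hS : ∀ s ∈ S, ∃ (i : Fin n) (g : FreeGroup (Fin n)),
      s = g * FreeGroup.of i * g⁻¹)
    (hU : U = Subgroup.closure (S : Set (FreeGroup (Fin n))))
    (hfin : U.FiniteIndex) :
    U.index = 1 ∧ U = ⊤ :=
  stmt_7_general n U S hS hU hfin
end

section
/- Let (A, v₀) be a finite rooted tree with canonical orientation, with vertex set partitioned as V₀ (vertices of positive valence 0, i.e., leaves), V₁ (positive valence 1), and V₂ (positive valence ≥ 2). Let n : VA → ℕ≥1 satisfy n(v) ≥ 2 for v ∈ V₁ and n(v) = 1 for v ∈ V₀ ∪ V₂, let b : V₀ → ℕ≥1 be arbitrary, and let h be the height function determined by n. Define B : VA → ℕ recursively by: B(v) = b(v) if v is a leaf; B(v) = n(v)·B(v₁) if v has exactly one child v₁; and B(v) = (∑ᵢ B(vᵢ)) − (d−1) if v has children v₁,…,v_d with d ≥ 2. Then B(v₀) = ∑_{v ∈ V₀} h(v)·b(v)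 − ∑_{v ∈ V₂} h(v)·(val₊(v) − 1), where val₊(v) denotes the number of children of v. -/
/-!
Weight each vertex by its height `h`. Since `h u = h v * n v` for a child `u` of `v`, and `n v = 1`
when `v` has at least two children, Schubert's recursions give at every vertex `v` with `d` children
the balance
  `h v * B v + [d ≥ 2] h v (d - 1) = ∑_{u child of v} h u * B u + [d = 0] h v * b v`.
Summing over all vertices, each `h u * B u` with `u ≠ v₀` occurs once on both sides and cancels,
leaving `B v₀` since `h v₀ = 1`. The truncated subtraction in the recursion is harmless because
`B ≥ 1`, by induction up the tree.
-/

/-- Product of the weights `n` along the ancestor path of length `k` above `v`. -/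
def heightAux {V : Type*} (parent : V → V) (n : V → ℕ) : ℕ → V → ℕ
  | 0, _ => 1
  | k + 1, v => heightAux parent n k (parent v) * n (parent v)

open Finset

theorem wellFounded_of_depth_lt {V : Type*} [Finite V] (depth : V → ℕ) {r : V → V → Prop}
    (hr : ∀ u v, r u v → depth v < depth u) : WellFounded r := by
  have : IsTrans V (fun u v => depth v < depth u) := ⟨fun _ _ _ h₁ h₂ => h₂.trans h₁⟩
  have : Std.Irrefl (fun u v : V => depth v < depth u) := ⟨fun _ => lt_irrefl _⟩
  exact Subrelation.wf (hr _ _) (Finite.wellFounded_of_trans_of_irrefl _)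

section RootedTree

variable {V : Type*} [Fintype V] [DecidableEq V] {v₀ : V} {parent : V → V}
  {children : V → Finset V}

theorem sum_sum_children {M : Type*} [AddCommMonoid M]
    (hchildren : ∀ v, children v = univ.filter (fun w => parent w = v ∧ w ≠ v₀)) (f : V → M) :
    ∑ v, ∑ u ∈ children v, f u = ∑ u ∈ univ.erase v₀, f u := by
  rw [← sum_fiberwise (univ.erase v₀) parent f]
  refine sum_congr rfl fun v _ => sum_congr ?_ fun _ _ => rfl
  ext u
  simp [hchildren, and_comm]

theorem add_sum_eq_sum_of_balance {M : Type*} [AddCancelCommMonoid M]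
    (hchildren : ∀ v, children v = univ.filter (fun w => parent w = v ∧ w ≠ v₀))
    {F c ℓ : V → M} (hbal : ∀ v, F v + c v = ∑ u ∈ children v, F u + ℓ v) :
    F v₀ + ∑ v, c v = ∑ v, ℓ v := by
  have hsum := sum_congr rfl fun v (_ : v ∈ univ) => hbal v
  rw [sum_add_distrib, sum_add_distrib, sum_sum_children hchildren,
    ← add_sum_erase univ F (mem_univ v₀), add_assoc, add_left_comm] at hsum
  exact add_left_cancel hsum

end RootedTree

section Schubert

variable {V : Type*} {children : V → Finset V} {n b B : V → ℕ}

theorem one_le_of_schubert_recursion (wf : WellFounded fun u v => u ∈ children v)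
    (hn1 : ∀ v : V, (children v).card = 1 → 2 ≤ n v)
    (hb : ∀ v : V, (children v).card = 0 → 1 ≤ b v)
    (hB0 : ∀ v : V, (children v).card = 0 → B v = b v)
    (hB1 : ∀ v : V, (children v).card = 1 → ∀ w ∈ children v, B v = n v * B w)
    (hB2 : ∀ v : V, 2 ≤ (children v).card →
      B v = (∑ w ∈ children v, B w) - ((children v).card - 1))
    (v : V) : 1 ≤ B v := by
  induction v using wf.induction with
  | _ v ih =>
    obtain h0 | h1 | h2 : (children v).card = 0 ∨ (children v).card = 1 ∨
        2 ≤ (children v).card := by omega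
    · exact hB0 v h0 ▸ hb v h0
    · obtain ⟨u, hu⟩ := card_eq_one.mp h1
      have hu_mem : u ∈ children v := hu ▸ mem_singleton_self u
      rw [hB1 v h1 u hu_mem]
      exact one_le_mul_of_one_le_of_one_le (by linarith [hn1 v h1]) (ih u hu_mem)
    · have hcard : (children v).card ≤ ∑ w ∈ children v, B w := by
        simpa using card_nsmul_le_sum (children v) B 1 ih
      rw [hB2 v h2]
      omega

theorem schubert_weighted_balance (h : V → ℕ) (hh : ∀ v, ∀ u ∈ children v, h u = h v * n v)
    (hpos : ∀ v, 1 ≤ B v) (hn2 : ∀ v : V, (children v).card ≠ 1 → n v = 1)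
    (hB0 : ∀ v : V, (children v).card = 0 → B v = b v)
    (hB1 : ∀ v : V, (children v).card = 1 → ∀ w ∈ children v, B v = n v * B w)
    (hB2 : ∀ v : V, 2 ≤ (children v).card →
      B v = (∑ w ∈ children v, B w) - ((children v).card - 1))
    (v : V) :
    h v * B v + (if 2 ≤ (children v).card then h v * ((children v).card - 1) else 0)
      = ∑ u ∈ children v, h u * B u + (if (children v).card = 0 then h v * b v else 0) := by
  obtain h0 | h1 | h2 : (children v).card = 0 ∨ (children v).card = 1 ∨
      2 ≤ (children v).card := by omega
  · simp [card_eq_zero.mp h0, hB0 v h0]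
  · obtain ⟨u, hu⟩ := card_eq_one.mp h1
    have hu_mem : u ∈ children v := hu ▸ mem_singleton_self u
    simp [hu, hh v u hu_mem, hB1 v h1 u hu_mem, mul_assoc]
  · have hsum : B v + ((children v).card - 1) = ∑ u ∈ children v, B u := by
      have hcard : (children v).card ≤ ∑ w ∈ children v, B w := by
        simpa using card_nsmul_le_sum (children v) B 1 fun u _ => hpos u
      rw [hB2 v h2]
      omega
    have hh' : ∀ u ∈ children v, h u * B u = h v * B u := fun u hu => by
      rw [hh v u hu, hn2 v (by omega), mul_one]
    rw [if_pos h2, if_neg (by omega), add_zero, sum_congr rfl hh', ← mul_sum, ← hsum, mul_add]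

end Schubert

/-- Closed formula for the bridge number of the knot associated to a labeled
rooted tree: if `B` satisfies Schubert's recursions
(`B(v) = b(v)` at leaves, `B(v) = n(v)·B(child)` at valence-one vertices,
`B(v) = ∑ B(child) − (d−1)` at vertices with `d ≥ 2` children), then
`B(v₀) = ∑_{v ∈ V₀} h(v)·b(v) − ∑_{v ∈ V₂} h(v)·(val₊(v) − 1)`. -/
theorem stmt_14 {V : Type*} [Fintype V] [DecidableEq V]
    (v₀ : V) (parent : V → V) (depth : V → ℕ)
    (hroot : depth v₀ = 0)
    (hdepth : ∀ v : V, v ≠ v₀ → depth v = depth (parent v) + 1)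
    (children : V → Finset V)
    (hchildren : ∀ v : V, children v
      = Finset.univ.filter (fun w => parent w = v ∧ w ≠ v₀))
    (n : V → ℕ)
    (hn1 : ∀ v : V, (children v).card = 1 → 2 ≤ n v)
    (hn2 : ∀ v : V, (children v).card ≠ 1 → n v = 1)
    (b : V → ℕ) (hb : ∀ v : V, (children v).card = 0 → 1 ≤ b v)
    (h : V → ℕ) (hh : ∀ v : V, h v = heightAux parent n (depth v) v)
    (B : V → ℕ)
    (hB0 : ∀ v : V, (children v).card = 0 → B v = b v)
    (hB1 : ∀ v : V, (children v).card = 1 → ∀ w ∈ children v, B v = n v * B w)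
    (hB2 : ∀ v : V, 2 ≤ (children v).card →
      B v = (∑ w ∈ children v, B w) - ((children v).card - 1)) :
    B v₀ = (∑ v ∈ Finset.univ.filter (fun v : V => (children v).card = 0),
              h v * b v)
         - (∑ v ∈ Finset.univ.filter (fun v : V => 2 ≤ (children v).card),
              h v * ((children v).card - 1)) := by
  have mem_children : ∀ u v, u ∈ children v ↔ parent u = v ∧ u ≠ v₀ := by
    simp [hchildren]
  have wf : WellFounded fun u v => u ∈ children v :=
    wellFounded_of_depth_lt depth fun u v hu => by
      obtain ⟨rfl, hu₀⟩ := (mem_children u v).1 hu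
      rw [hdepth u hu₀]
      omega
  have h_root : h v₀ = 1 := by rw [hh, hroot]; rfl
  have h_child : ∀ v, ∀ u ∈ children v, h u = h v * n v := fun v u hu => by
    obtain ⟨rfl, hu₀⟩ := (mem_children u v).1 hu
    rw [hh, hh, hdepth u hu₀]
    rfl
  have hpos := one_le_of_schubert_recursion wf hn1 hb hB0 hB1 hB2
  have key := add_sum_eq_sum_of_balance hchildren
    (schubert_weighted_balance h h_child hpos hn2 hB0 hB1 hB2)
  rw [h_root, one_mul, ← sum_filter, ← sum_filter] at key
  omega
end

section
/- Let G be the free product ℤ/p * ℤ/q with p, q coprime and 2 ≤ q < p, and let U ≤ G be a free subgroup of finite rank r that is of finite index in G. Then 1 − r ≤ −pq + p + q; in particular, if r < q then U cannot have finite index in G. -/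
/-!
Let `G = A ∗ B` with `A = ℤ/p`, `B = ℤ/q`, let `X = G ⧸ U`, `n = |X|`, and let `V = ℚ^X` be the
permutation representation of `G`. A 1-cocycle on a free product can be prescribed independently
on the two factors; taking an arbitrary coboundary on each factor gives
`dim Z¹(G, V) ≥ (n - dim V^A) + (n - dim V^B)`, where `V^A` is spanned by the indicators of the
`A`-orbits. Conversely, a cocycle whose values at the base point vanish on the `r` free
generators of `U` is a coboundary (the injective half of Shapiro's lemma), so
`dim Z¹(G, V) ≤ r + n - 1`. Hence `n + 1 ≤ r + #(A-orbits) + #(B-orbits)`.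

Since `U` is torsion-free, the finite factors act freely on `X`, so there are `n / p` and
`n / q` orbits and `pq ∣ n`; writing `n = pqt` gives `1 - r ≤ t (p + q - pq) ≤ p + q - pq`.
-/

open Module Representation groupCohomology MulAction
open scoped Monoid.Coprod

universe u

section PermRep

variable (k G X : Type*) [CommRing k] [Group G] [MulAction G X]

def permRep : Representation k G (X → k) where
  toFun g := LinearMap.funLeft k k (g⁻¹ • ·)
  map_one' := by ext; simp
  map_mul' g h := by ext; simp [mul_smul]

variable {k G X}

@[simp] theorem permRep_apply (g : G) (f : X → k) (x : X) :
    permRep k G X g f x = f (g⁻¹ • x) :=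
  rfl

theorem finrank_invariants_permRep_le {k : Type*} [Field k] [Finite X] :
    finrank k (invariants (permRep k G X)) ≤ Nat.card (orbitRel.Quotient G X) := by
  have : Fintype (orbitRel.Quotient G X) := Fintype.ofFinite _
  have hle : invariants (permRep k G X) ≤
      LinearMap.range (LinearMap.funLeft k k (Quotient.mk (orbitRel G X))) := by
    intro f hf
    refine ⟨fun ω => f ω.out, funext fun x => ?_⟩
    obtain ⟨g, hg⟩ := Quotient.exact (Quotient.out_eq (Quotient.mk (orbitRel G X) x))
    have := congrFun ((mem_invariants _ _).1 hf g⁻¹) x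
    simp_all [LinearMap.funLeft_apply]
  calc finrank k (invariants (permRep k G X))
      ≤ finrank k (LinearMap.range (LinearMap.funLeft k k (Quotient.mk (orbitRel G X)))) :=
        Submodule.finrank_mono hle
    _ ≤ finrank k (orbitRel.Quotient G X → k) := LinearMap.finrank_range_le _
    _ = Nat.card (orbitRel.Quotient G X) := by
        rw [Module.finrank_fintype_fun_eq_card, Nat.card_eq_fintype_card]

theorem card_eq_card_orbitRel_quotient_mul_card [Finite G] [Finite X]
    (hfree : ∀ (g : G) (x : X), g • x = x → g = 1) :
    Nat.card X = Nat.card (orbitRel.Quotient G X) * Nat.card G := by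
  have : Fintype (orbitRel.Quotient G X) := Fintype.ofFinite _
  have hstab : ∀ x : X, stabilizer G x = ⊥ := fun x =>
    (Subgroup.eq_bot_iff_forall _).2 fun g hg => hfree g x hg
  rw [Nat.card_congr (selfEquivSigmaOrbitsQuotientStabilizer G X), Nat.card_sigma]
  simp only [hstab, Nat.card_congr QuotientGroup.quotientBot.toEquiv, Finset.sum_const,
    Finset.card_univ, smul_eq_mul, Nat.card_eq_fintype_card]

end PermRep

namespace Representation

variable {k G V : Type*} [CommRing k] [Group G] [AddCommGroup V] [Module k V]

theorem invariants_comp_eq_invariants_comp_subtype_range {H : Type*} [Group H]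
    (ρ : Representation k G V) (φ : H →* G) :
    invariants (ρ.comp φ) = invariants (ρ.comp φ.range.subtype) := by
  ext v
  simp only [mem_invariants, MonoidHom.comp_apply, Subgroup.coe_subtype, Subtype.forall,
    MonoidHom.mem_range, forall_exists_index, forall_apply_eq_imp_iff]

def affineConjTranslate (ρ : Representation k G V) (v : V) : G →* (V →ᵃ[k] V) where
  toFun g := ⟨fun w => ρ g (w + v) - v, ρ g, fun w u => by
    simp only [vadd_eq_add, map_add]; abel⟩
  map_one' := by ext w; simp
  map_mul' g h := by ext w; simp [map_add, Module.End.mul_apply]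

@[simp] theorem affineConjTranslate_apply (ρ : Representation k G V) (v : V) (g : G) (w : V) :
    ρ.affineConjTranslate v g w = ρ g (w + v) - v := rfl

theorem linearHom_comp_affineConjTranslate (ρ : Representation k G V) (v : V) :
    AffineMap.linearHom.comp (ρ.affineConjTranslate v) = ρ := rfl

end Representation

namespace groupCohomology

section CommRing

variable {k G V : Type u} [CommRing k] [Group G] [AddCommGroup V] [Module k V]

theorem mem_cocycles₁_of_linearHom_comp_eq {ρ : Representation k G V}
    (ψ : G →* (V →ᵃ[k] V)) (hψ : AffineMap.linearHom.comp ψ = ρ) :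
    (fun g => ψ g 0) ∈ cocycles₁ (Rep.of ρ) := by
  rw [mem_cocycles₁_iff]
  intro g h
  have hlin : (ψ g).linear = ρ g := DFunLike.congr_fun hψ g
  rw [map_mul, AffineMap.coe_mul, Function.comp_apply, AffineMap.decomp (ψ g), hlin]
  simp

/-- Conjugating `ρ` by the translation by `v` gives an affine action whose translation part is
the coboundary of `v`; the coproduct glues these affine actions on the two factors. -/
theorem exists_cocycles₁_coprod {A B : Type u} [Group A] [Group B]
    (ρ : Representation k (A ∗ B) V) (vA vB : V) :
    ∃ z ∈ cocycles₁ (Rep.of ρ),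
      z ∘ Monoid.Coprod.inl = (d₀₁ (Rep.of (ρ.comp Monoid.Coprod.inl))).hom vA ∧
      z ∘ Monoid.Coprod.inr = (d₀₁ (Rep.of (ρ.comp Monoid.Coprod.inr))).hom vB := by
  set ψ := Monoid.Coprod.lift ((ρ.affineConjTranslate vA).comp Monoid.Coprod.inl)
    ((ρ.affineConjTranslate vB).comp Monoid.Coprod.inr)
  refine ⟨fun g => ψ g 0, mem_cocycles₁_of_linearHom_comp_eq ψ
    (Monoid.Coprod.hom_ext ?_ ?_), ?_, ?_⟩
  · rw [MonoidHom.comp_assoc, Monoid.Coprod.lift_comp_inl, ← MonoidHom.comp_assoc,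
      linearHom_comp_affineConjTranslate]
  · rw [MonoidHom.comp_assoc, Monoid.Coprod.lift_comp_inr, ← MonoidHom.comp_assoc,
      linearHom_comp_affineConjTranslate]
  · funext a; rw [d₀₁_hom_apply]; simp [ψ]
  · funext b; rw [d₀₁_hom_apply]; simp [ψ]

variable {X : Type u} [MulAction G X]

theorem cocycles₁_apply_eq_zero_of_mem_closure {x : X} {s : Set G} (hs : s ⊆ stabilizer G x)
    (z : cocycles₁ (Rep.of (permRep k G X))) (hz : ∀ g ∈ s, z g x = 0) {g : G}
    (hg : g ∈ Subgroup.closure s) : z g x = 0 := by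
  have hfix : ∀ g ∈ Subgroup.closure s, g⁻¹ • x = x := fun g hg =>
    inv_smul_eq_iff.2 ((Subgroup.closure_le _).2 hs hg).symm
  induction hg using Subgroup.closure_induction with
  | mem g hg => exact hz g hg
  | one => rw [cocycles₁_map_one]; rfl
  | mul g h hg _ hzg hzh =>
    have := congrFun ((mem_cocycles₁_iff z).1 z.2 g h) x
    simp_all
  | inv g hg hzg =>
    have := congrFun (cocycles₁_map_inv z g) x
    simp_all

theorem mem_coboundaries₁_of_forall_mem_apply_eq_zero {U : Subgroup G}
    (z : cocycles₁ (Rep.of (permRep k G (G ⧸ U))))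
    (hz : ∀ u ∈ U, z u ((1 : G) : G ⧸ U) = 0) :
    (z : G → G ⧸ U → k) ∈ coboundaries₁ (Rep.of (permRep k G (G ⧸ U))) := by
  have hcocycle := (mem_cocycles₁_iff z).1 z.2
  -- `z h (hU)` depends only on the coset `hU`; minus this value is the primitive of `z`.
  have hrep : ∀ h h' : G, (h : G ⧸ U) = h' → z h' h = z h h := by
    intro h h' hh'
    obtain ⟨u, hu, rfl⟩ : ∃ u ∈ U, h' = h * u :=
      ⟨h⁻¹ * h', QuotientGroup.eq.1 hh', by group⟩
    have := congrFun (hcocycle h u) h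
    simp_all
  refine ⟨fun x => -z x.out x, funext fun g => funext fun x => ?_⟩
  induction x using QuotientGroup.induction_on with
  | H h =>
  have hinv := congrFun (cocycles₁_map_inv z g) h
  have hmul := congrFun (hcocycle g⁻¹ h) (g⁻¹ * h : G)
  rw [d₀₁_hom_apply]
  simp only [permRep_apply, Quotient.smul_mk, smul_eq_mul, Pi.neg_apply, Pi.add_apply, inv_inv,
    mul_inv_cancel_left, Pi.sub_apply, sub_neg_eq_add] at hinv hmul ⊢
  rw [hrep _ _ (QuotientGroup.out_eq' _).symm, hrep _ _ (QuotientGroup.out_eq' _).symm, hmul,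
    hinv]
  ring

end CommRing

section Field

variable {k G V : Type u} [Field k] [Group G] [AddCommGroup V] [Module k V]

instance [FiniteDimensional k V] (ρ : Representation k G V) :
    FiniteDimensional k (coboundaries₁ (Rep.of ρ)) :=
  LinearMap.finiteDimensional_range _

theorem finrank_coboundaries₁_add_finrank_invariants [FiniteDimensional k V]
    (ρ : Representation k G V) :
    finrank k (coboundaries₁ (Rep.of ρ)) + finrank k (invariants ρ) = finrank k V := by
  rw [← LinearMap.finrank_range_add_finrank_ker (d₀₁ (Rep.of ρ)).hom,
    d₀₁_ker_eq_invariants]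
  rfl

theorem rank_coboundaries₁_add_rank_coboundaries₁_le_rank_cocycles₁ {A B : Type u} [Group A]
    [Group B] (ρ : Representation k (A ∗ B) V) :
    Module.rank k (coboundaries₁ (Rep.of (ρ.comp Monoid.Coprod.inl))) +
        Module.rank k (coboundaries₁ (Rep.of (ρ.comp Monoid.Coprod.inr))) ≤
      Module.rank k (cocycles₁ (Rep.of ρ)) := by
  set restrict : cocycles₁ (Rep.of ρ) →ₗ[k] (A → V) × (B → V) :=
    ((LinearMap.funLeft k V Monoid.Coprod.inl).prod
      (LinearMap.funLeft k V Monoid.Coprod.inr)).comp (cocycles₁ (Rep.of ρ)).subtype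
  set incl := (coboundaries₁ (Rep.of (ρ.comp Monoid.Coprod.inl))).subtype.prodMap
    (coboundaries₁ (Rep.of (ρ.comp Monoid.Coprod.inr))).subtype
  have hincl : LinearMap.range incl ≤ LinearMap.range restrict := by
    rintro _ ⟨⟨⟨_, vA, rfl⟩, ⟨_, vB, rfl⟩⟩, rfl⟩
    obtain ⟨z, hz, hzA, hzB⟩ := exists_cocycles₁_coprod ρ vA vB
    exact ⟨⟨z, hz⟩, Prod.ext hzA hzB⟩
  calc _ = Module.rank k (LinearMap.range incl) := by
        rw [rank_range_of_injective _ (Function.Injective.prodMap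
          Subtype.val_injective Subtype.val_injective), rank_prod']
    _ ≤ Module.rank k (LinearMap.range restrict) := Submodule.rank_mono hincl
    _ ≤ _ := rank_range_le restrict

theorem rank_cocycles₁_le {U : Subgroup G} {r : ℕ} (e : Fin r → G)
    (he : Subgroup.closure (Set.range e) = U) :
    Module.rank k (cocycles₁ (Rep.of (permRep k G (G ⧸ U)))) ≤
      r + Module.rank k (coboundaries₁ (Rep.of (permRep k G (G ⧸ U)))) := by
  set Z := cocycles₁ (Rep.of (permRep k G (G ⧸ U)))
  set x₀ : G ⧸ U := ((1 : G) : G ⧸ U)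
  let Φ : Z →ₗ[k] Fin r → k := LinearMap.pi fun i =>
    (LinearMap.proj x₀).comp ((LinearMap.proj (e i)).comp Z.subtype)
  have hker : ∀ z ∈ LinearMap.ker Φ,
      (z : G → G ⧸ U → k) ∈ coboundaries₁ (Rep.of (permRep k G (G ⧸ U))) := by
    intro z hz
    refine mem_coboundaries₁_of_forall_mem_apply_eq_zero z fun u hu => ?_
    have hs : Set.range e ⊆ stabilizer G x₀ := by
      rw [stabilizer_quotient, ← he]
      exact Subgroup.subset_closure
    refine cocycles₁_apply_eq_zero_of_mem_closure hs z ?_ (he ▸ hu)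
    rintro _ ⟨i, rfl⟩
    exact congrFun hz i
  have hrange : Module.rank k (LinearMap.range Φ) ≤ r := by
    simpa using Submodule.rank_le (LinearMap.range Φ)
  have hkerB : Module.rank k (LinearMap.ker Φ) ≤
      Module.rank k (coboundaries₁ (Rep.of (permRep k G (G ⧸ U)))) := by
    rw [← rank_map_eq Z.injective_subtype]
    exact Submodule.rank_mono (Submodule.map_le_iff_le_comap.2 fun z hz => hker z hz)
  rw [← LinearMap.rank_range_add_rank_ker Φ]
  exact add_le_add hrange hkerB

end Field

end groupCohomology

section TorsionFree

variable {G : Type*} [Group G]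

theorem MulEquiv.closure_range_coe_symm_of {U : Subgroup G} {α : Type*}
    (iso : U ≃* FreeGroup α) :
    Subgroup.closure (Set.range fun a => (iso.symm (FreeGroup.of a) : G)) = U := by
  have h := congrArg (Subgroup.map (U.subtype.comp iso.symm.toMonoidHom))
    (FreeGroup.closure_range_of α)
  rw [MonoidHom.map_closure, ← Set.range_comp] at h
  refine h.trans ?_
  rw [← Subgroup.map_map]
  simp [← MonoidHom.range_eq_map]

theorem eq_one_of_isOfFinOrder_of_smul_eq {U : Subgroup G} [IsMulTorsionFree U] {g : G}
    (hg : IsOfFinOrder g) {x : G ⧸ U} (hx : g • x = x) : g = 1 := by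
  induction x using QuotientGroup.induction_on with
  | H h =>
  have hmem : h⁻¹ * g * h ∈ U := by
    rw [MulAction.Quotient.smul_mk, smul_eq_mul, eq_comm, QuotientGroup.eq] at hx
    simpa [mul_assoc] using hx
  have hfin : IsOfFinOrder (⟨_, hmem⟩ : U) :=
    Submonoid.isOfFinOrder_coe.1 <| by
      simpa using (MulAut.conj h⁻¹).toMonoidHom.isOfFinOrder hg
  have := congrArg Subtype.val hfin.eq_one'
  simpa [mul_assoc, mul_inv_eq_one, inv_mul_eq_one] using this

theorem card_quotient_eq_card_orbitRel_quotient_range_mul_card {U : Subgroup G}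
    [IsMulTorsionFree U] [U.FiniteIndex] {H : Type*} [Group H] [Finite H] {φ : H →* G}
    (hφ : Function.Injective φ) :
    Nat.card (G ⧸ U) = Nat.card (orbitRel.Quotient φ.range (G ⧸ U)) * Nat.card H := by
  have : Finite φ.range := Finite.of_equiv _ (MonoidHom.ofInjective hφ).toEquiv
  rw [Nat.card_congr (MonoidHom.ofInjective hφ).toEquiv]
  exact card_eq_card_orbitRel_quotient_mul_card fun s _ hx => Subtype.ext <|
    eq_one_of_isOfFinOrder_of_smul_eq (Submonoid.isOfFinOrder_coe.2 (isOfFinOrder_of_finite s)) hx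

end TorsionFree

namespace Monoid.Coprod

variable {A B : Type} [Group A] [Group B] {U : Subgroup (A ∗ B)} [U.FiniteIndex] {r : ℕ}

theorem card_quotient_add_finrank_invariants_le (k : Type) [Field k] (e : Fin r → A ∗ B)
    (he : Subgroup.closure (Set.range e) = U) :
    Nat.card ((A ∗ B) ⧸ U) + finrank k (invariants (permRep k (A ∗ B) ((A ∗ B) ⧸ U))) ≤
      r + finrank k (invariants ((permRep k (A ∗ B) ((A ∗ B) ⧸ U)).comp inl)) +
        finrank k (invariants ((permRep k (A ∗ B) ((A ∗ B) ⧸ U)).comp inr)) := by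
  set ρ := permRep k (A ∗ B) ((A ∗ B) ⧸ U)
  have : Fintype ((A ∗ B) ⧸ U) := Fintype.ofFinite _
  have hn : finrank k ((A ∗ B) ⧸ U → k) = Nat.card ((A ∗ B) ⧸ U) := by
    rw [Module.finrank_fintype_fun_eq_card, Nat.card_eq_fintype_card]
  have hG := finrank_coboundaries₁_add_finrank_invariants ρ
  have hA := finrank_coboundaries₁_add_finrank_invariants (ρ.comp inl)
  have hB := finrank_coboundaries₁_add_finrank_invariants (ρ.comp inr)
  have hrank : Module.rank k (coboundaries₁ (Rep.of (ρ.comp inl))) +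
      Module.rank k (coboundaries₁ (Rep.of (ρ.comp inr))) ≤
        r + Module.rank k (coboundaries₁ (Rep.of ρ)) :=
    (rank_coboundaries₁_add_rank_coboundaries₁_le_rank_cocycles₁ ρ).trans
      (rank_cocycles₁_le e he)
  rw [← finrank_eq_rank, ← finrank_eq_rank, ← finrank_eq_rank] at hrank
  have hfinrank : finrank k (coboundaries₁ (Rep.of (ρ.comp inl))) +
      finrank k (coboundaries₁ (Rep.of (ρ.comp inr))) ≤
        r + finrank k (coboundaries₁ (Rep.of ρ)) := by
    exact_mod_cast hrank
  omega

theorem card_quotient_add_one_le (e : Fin r → A ∗ B) (he : Subgroup.closure (Set.range e) = U) :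
    Nat.card ((A ∗ B) ⧸ U) + 1 ≤
      r + Nat.card (orbitRel.Quotient (inl : A →* A ∗ B).range ((A ∗ B) ⧸ U)) +
        Nat.card (orbitRel.Quotient (inr : B →* A ∗ B).range ((A ∗ B) ⧸ U)) := by
  have hconst : 1 ≤ finrank ℚ (invariants (permRep ℚ (A ∗ B) ((A ∗ B) ⧸ U))) := by
    refine Submodule.one_le_finrank_iff.2 fun h => ?_
    have hone : (fun _ => 1 : (A ∗ B) ⧸ U → ℚ) ∈
        invariants (permRep ℚ (A ∗ B) ((A ∗ B) ⧸ U)) :=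
      (mem_invariants _ _).2 fun _ => rfl
    rw [h, Submodule.mem_bot] at hone
    exact one_ne_zero (congrFun hone (1 : A ∗ B))
  have horbits {H : Type} [Group H] (φ : H →* A ∗ B) :
      finrank ℚ (invariants ((permRep ℚ (A ∗ B) ((A ∗ B) ⧸ U)).comp φ)) ≤
        Nat.card (orbitRel.Quotient φ.range ((A ∗ B) ⧸ U)) := by
    rw [invariants_comp_eq_invariants_comp_subtype_range]
    exact finrank_invariants_permRep_le
  have hcount := card_quotient_add_finrank_invariants_le ℚ e he
  have hA := horbits inl
  have hB := horbits inr
  omega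

end Monoid.Coprod

theorem one_sub_le_neg_mul_add_add {p q n a b r : ℕ} (hcop : p.Coprime q) (hp : 2 ≤ p)
    (hq : 2 ≤ q) (hn : 0 < n) (ha : n = a * p) (hb : n = b * q) (h : n + 1 ≤ r + a + b) :
    (1 : ℤ) - r ≤ -(p * q : ℤ) + p + q := by
  obtain ⟨t, rfl⟩ : p * q ∣ n :=
    hcop.mul_dvd_of_dvd_of_dvd (Dvd.intro_left _ ha.symm) (Dvd.intro_left _ hb.symm)
  obtain rfl : a = q * t := Nat.eq_of_mul_eq_mul_right (by omega : 0 < p) (by rw [← ha]; ring)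
  obtain rfl : b = p * t := Nat.eq_of_mul_eq_mul_right (by omega : 0 < q) (by rw [← hb]; ring)
  have ht : (1 : ℤ) ≤ t := by exact_mod_cast Nat.pos_of_mul_pos_left hn
  have h' : ((p * q * t + 1 : ℕ) : ℤ) ≤ ((r + q * t + p * t : ℕ) : ℤ) := by
    exact_mod_cast h
  push_cast at h'
  nlinarith [mul_le_mul_of_nonneg_left ht (show (0 : ℤ) ≤ p * q - p - q by nlinarith)]

open Monoid

/-- A finite-index free subgroup of rank `r` of `ℤ/p ∗ ℤ/q` (p, q coprime,
`2 ≤ q < p`) satisfies `1 − r ≤ −pq + p + q`; in particular `r ≥ q`, i.e. a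
free subgroup of rank `< q` cannot have finite index. -/
theorem stmt_15 (p q : ℕ) (hcop : Nat.Coprime p q) (hq : 2 ≤ q) (hqp : q < p)
    (U : Subgroup (Multiplicative (ZMod p) ∗ Multiplicative (ZMod q)))
    (hfin : U.FiniteIndex) (r : ℕ)
    (hfree : Nonempty (U ≃* FreeGroup (Fin r))) :
    ((1 : ℤ) - r ≤ -(p * q : ℤ) + p + q) ∧ ¬ r < q := by
  have : NeZero p := ⟨by omega⟩
  have : NeZero q := ⟨by omega⟩
  obtain ⟨iso⟩ := hfree
  have : IsMulTorsionFree U := Function.Injective.isMulTorsionFree iso.toMonoidHom iso.injective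
  have hcount := Coprod.card_quotient_add_one_le _ iso.closure_range_coe_symm_of
  have hcardA := card_quotient_eq_card_orbitRel_quotient_range_mul_card (U := U)
    Coprod.inl_injective
  have hcardB := card_quotient_eq_card_orbitRel_quotient_range_mul_card (U := U)
    Coprod.inr_injective
  simp only [Nat.card_eq_fintype_card, Fintype.card_multiplicative, ZMod.card] at hcardA hcardB
  have hχ := one_sub_le_neg_mul_add_add hcop (by omega) hq Nat.card_pos hcardA hcardB hcount
  exact ⟨hχ, fun hr => by nlinarith⟩
end
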